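/- arXiv:math/0509302 — 6 statements merged into one kernel-verified Lean document; each statement's English description precedes it below -/
import Mathlib

section
/- For every x ∈ H one has Σ φ(x·S(h₍₂₎))·h₍₁₎ = n·x. (Equivalently, the element c₂ = Σ h₍₁₎ ⊗ S(h₍₂₎) of H ⊗ H satisfies the quasi-basis property (id_H ⊗ n⁻¹φ)((1 ⊗ x)·c₂) = x for all x ∈ H.) -/
open TensorProduct Coalgebra HopfAlgebra

/-! Since `h` is a right integral, `Δ(h)(x ⊗ 1) = Δ(h)(1 ⊗ S(x))`. Together with `S² = id`
and `φ ∘ S = φ`, which give `φ(x S(h₂)) = φ(h₂ S(x))`, this turns the sum into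
`Σ φ(h₂) h₁ x = φ(h) x = n x`, by the integral property of `φ`. -/

namespace HopfAlgebra

variable {R H : Type*} [CommSemiring R] [Semiring H] [HopfAlgebra R H]

theorem sum_comul_mul_one_tmul_antipode {x : H} {ι : Type*} (ρ : Repr R x ι) :
    ∑ i ∈ ρ.index, comul (R := R) (ρ.left i) * (1 ⊗ₜ antipode R (ρ.right i)) =
      x ⊗ₜ[R] 1 := by
  have hcoassoc :=
    congr(LinearMap.lTensor H (LinearMap.mul' R H ∘ₗ LinearMap.lTensor H (antipode R))
      $(sum_tmul_tmul_eq ρ (fun i ↦ ℛ R (ρ.left i)) (fun i ↦ ℛ R (ρ.right i))))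
  simp only [map_sum, LinearMap.lTensor_tmul, LinearMap.coe_comp, Function.comp_apply,
    LinearMap.mul'_apply, ← tmul_sum, sum_mul_antipode_eq_algebraMap_counit] at hcoassoc
  have hcounit := congr(LinearMap.lTensor H (Algebra.linearMap R H) $(sum_tmul_counit_eq ρ))
  simp only [map_sum, LinearMap.lTensor_tmul, Algebra.linearMap_apply, map_one] at hcounit
  rw [← hcounit, ← hcoassoc]
  refine Finset.sum_congr rfl fun i _ ↦ ?_
  rw [← (ℛ R (ρ.left i)).eq, Finset.sum_mul]
  simp [Algebra.TensorProduct.tmul_mul_tmul]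

theorem comul_mul_one_tmul_antipode {Λ : H} (hΛ : ∀ y : H, Λ * y = counit (R := R) y • Λ)
    (x : H) : comul (R := R) Λ * (1 ⊗ₜ antipode R x) = comul Λ * (x ⊗ₜ 1) := by
  let ρ := ℛ R x
  calc comul Λ * (1 ⊗ₜ antipode R x)
      = ∑ i ∈ ρ.index,
          counit (R := R) (ρ.left i) • comul Λ * (1 ⊗ₜ antipode R (ρ.right i)) := by
        conv_lhs => rw [← sum_counit_smul ρ]
        simp [Finset.mul_sum, tmul_sum]
    _ = ∑ i ∈ ρ.index,
          comul (R := R) (Λ * ρ.left i) * (1 ⊗ₜ antipode R (ρ.right i)) := by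
        simp [hΛ]
    _ = comul Λ * (x ⊗ₜ 1) := by
        simp only [Bialgebra.comul_mul, mul_assoc, ← Finset.mul_sum,
          sum_comul_mul_one_tmul_antipode]

theorem rid_lTensor_mul_tmul (f : H →ₗ[R] R) (t : H ⊗[R] H) (a b : H) :
    TensorProduct.rid R H (LinearMap.lTensor H f (t * (a ⊗ₜ b))) =
      TensorProduct.rid R H (LinearMap.lTensor H (f ∘ₗ LinearMap.mulRight R b) t) * a := by
  induction t using TensorProduct.induction_on with
  | zero => simp
  | tmul c d => simp [Algebra.TensorProduct.tmul_mul_tmul]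
  | add t u ht hu => simp only [add_mul, map_add, ht, hu]

end HopfAlgebra

theorem quasi_basis_property_c2_general
    {k : Type*} [Field k] {H : Type*} [Ring H] [HopfAlgebra k H]
    (n : k)
    (h : H)
    (hInt' : ∀ x : H, h * x = counit (R := k) x • h)
    (φ : H →ₗ[k] k)
    (hφInt' : ∀ x : H, TensorProduct.rid k H (LinearMap.lTensor H φ (comul x)) = φ x • 1)
    (hSS : ∀ x : H, antipode (R := k) (antipode (R := k) x) = x)
    (hφS : ∀ x : H, φ (antipode (R := k) x) = φ x)
    (hφh : φ h = n) :
    ∀ x : H,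
      TensorProduct.rid k H
        (LinearMap.lTensor H (φ ∘ₗ LinearMap.mulLeft k x ∘ₗ antipode (R := k)) (comul h))
        = n • x := by
  intro x
  have hφ : φ ∘ₗ LinearMap.mulLeft k x ∘ₗ antipode k =
      φ ∘ₗ LinearMap.mulRight k (antipode k x) := by
    ext y
    simp [← hφS (x * _), antipode_mul_antidistrib, hSS]
  calc _ = TensorProduct.rid k H
          (LinearMap.lTensor H (φ ∘ₗ LinearMap.mulRight k (antipode k x)) (comul h)) * 1 := by
        rw [hφ, mul_one]
    _ = TensorProduct.rid k H (LinearMap.lTensor H φ (comul h * (1 ⊗ₜ antipode k x))) :=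
        (rid_lTensor_mul_tmul _ _ _ _).symm
    _ = TensorProduct.rid k H (LinearMap.lTensor H φ (comul h * (x ⊗ₜ 1))) := by
        rw [comul_mul_one_tmul_antipode hInt']
    _ = n • x := by
        rw [rid_lTensor_mul_tmul, LinearMap.mulRight_one, LinearMap.comp_id, hφInt', hφh,
          smul_mul_assoc, one_mul]

/-- For every `x ∈ H` one has `Σ φ(x·S(h₍₂₎))·h₍₁₎ = n·x`, where `h` is the normalized
two-sided integral of the semisimple cosemisimple Hopf algebra `H` and `φ` the normalized
two-sided integral of its dual. -/
theorem quasi_basis_property_c2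
    {k : Type*} [Field k] {H : Type*} [Ring H] [HopfAlgebra k H]
    [FiniteDimensional k H]
    (n : k) (hn : n = (Module.finrank k H : k)) (hn0 : n ≠ 0)
    (h : H)
    (hInt : ∀ x : H, x * h = counit (R := k) x • h)
    (hInt' : ∀ x : H, h * x = counit (R := k) x • h)
    (hεh : counit (R := k) h = n)
    (φ : H →ₗ[k] k)
    (hφInt : ∀ x : H, TensorProduct.lid k H (LinearMap.rTensor H φ (comul x)) = φ x • 1)
    (hφInt' : ∀ x : H, TensorProduct.rid k H (LinearMap.lTensor H φ (comul x)) = φ x • 1)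
    (hφ1 : φ 1 = n)
    (hSS : ∀ x : H, antipode (R := k) (antipode (R := k) x) = x)
    (hSh : antipode (R := k) h = h)
    (hφS : ∀ x : H, φ (antipode (R := k) x) = φ x)
    (hφh : φ h = n)
    (hφtr : ∀ x y : H, φ (x * y) = φ (y * x)) :
    ∀ x : H,
      TensorProduct.rid k H
        (LinearMap.lTensor H (φ ∘ₗ LinearMap.mulLeft k x ∘ₗ antipode (R := k)) (comul h))
        = n • x :=
  quasi_basis_property_c2_general n h hInt' φ hφInt' hSS hφS hφh
end

section
/- The element Σ h₍₁₎ ⊗ S(h₍₂₎) of H ⊗ H is invariant under the flip: Σ h₍₁₎ ⊗ S(h₍₂₎) = Σ S(h₍₂₎) ⊗ h₍₁₎. -/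
/-!
The antipode is an anti-coalgebra map, `Δ ∘ S = (S ⊗ S) ∘ τ ∘ Δ`: in the convolution monoid
`Hom(H, H ⊗ H)` both sides are inverse to `Δ`, since `Δ = ι_L ⋆ ι_R` and
`(S ⊗ S) ∘ τ ∘ Δ = (ι_R ∘ S) ⋆ (ι_L ∘ S)` for the algebra maps `ι_L a = a ⊗ 1`, `ι_R a = 1 ⊗ a`.
Applied to `h = S h`, this gives `Δ h = Σ S h₍₂₎ ⊗ S h₍₁₎`, and applying `S` to the second
factor, with `S ∘ S = id`, is the claimed flip invariance.
-/

open TensorProduct Coalgebra HopfAlgebra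

section AntipodeAnticomul

open WithConv Algebra.TensorProduct

variable {R A : Type*} [CommSemiring R] [Semiring A]

lemma Bialgebra.toConv_comul_eq_includeLeft_mul_includeRight [Bialgebra R A] :
    toConv (comul : A →ₗ[R] A ⊗[R] A) =
      toConv (includeLeft : A →ₐ[R] A ⊗[R] A).toLinearMap *
        toConv (includeRight : A →ₐ[R] A ⊗[R] A).toLinearMap := by
  ext a
  simp [(ℛ R a).convMul_apply, ← (ℛ R a).eq]

variable [HopfAlgebra R A]

lemma AlgHom.toConv_comp_antipode_mul {B : Type*} [Semiring B] [Algebra R B] (f : A →ₐ[R] B) :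
    toConv (f.toLinearMap ∘ₗ antipode R) * toConv f.toLinearMap = 1 := by
  ext a
  rw [(ℛ R a).convMul_apply]
  simp [← map_mul, ← map_sum, sum_antipode_mul_eq_algebraMap_counit]

lemma HopfAlgebra.toConv_map_antipode_comp_comm_comp_comul :
    toConv (map (antipode R) (antipode R) ∘ₗ (TensorProduct.comm R A A).toLinearMap ∘ₗ comul) =
      toConv ((includeRight : A →ₐ[R] A ⊗[R] A).toLinearMap ∘ₗ antipode R) *
        toConv ((includeLeft : A →ₐ[R] A ⊗[R] A).toLinearMap ∘ₗ antipode R) := by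
  ext a
  simp [(ℛ R a).convMul_apply, ← (ℛ R a).eq]

theorem HopfAlgebra.comul_comp_antipode :
    comul ∘ₗ antipode R =
      map (antipode R) (antipode R) ∘ₗ (TensorProduct.comm R A A).toLinearMap ∘ₗ comul := by
  have left_inv : toConv (map (antipode R) (antipode R) ∘ₗ
      (TensorProduct.comm R A A).toLinearMap ∘ₗ comul) * toConv comul = 1 := by
    rw [toConv_map_antipode_comp_comm_comp_comul,
      Bialgebra.toConv_comul_eq_includeLeft_mul_includeRight, mul_assoc,
      ← mul_assoc (toConv (includeLeft.toLinearMap ∘ₗ _)),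
      AlgHom.toConv_comp_antipode_mul, one_mul, AlgHom.toConv_comp_antipode_mul]
  exact congrArg ofConv (left_inv_eq_right_inv left_inv LinearMap.comul_right_inv).symm

end AntipodeAnticomul

theorem c2_flip_invariant_general
    {k : Type*} [Field k] {H : Type*} [Ring H] [HopfAlgebra k H]
    (h : H)
    (hSS : ∀ x : H, antipode (R := k) (antipode (R := k) x) = x)
    (hSh : antipode (R := k) h = h) :
    LinearMap.lTensor H (antipode (R := k)) (comul h)
      = TensorProduct.comm k H H (LinearMap.lTensor H (antipode (R := k)) (comul h)) := by
  have hcomul : comul h = map (antipode k) (antipode k) (TensorProduct.comm k H H (comul h)) := by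
    simpa [hSh] using congr($(comul_comp_antipode (R := k) (A := H)) h)
  have hflip : LinearMap.lTensor H (antipode k) ∘ₗ map (antipode k) (antipode k) ∘ₗ
      (TensorProduct.comm k H H).toLinearMap =
        (TensorProduct.comm k H H).toLinearMap ∘ₗ LinearMap.lTensor H (antipode k) := by
    ext a b
    simp [hSS]
  conv_lhs => rw [hcomul]
  exact congr($hflip (comul h))

/-- The element `Σ h₍₁₎ ⊗ S(h₍₂₎)` of `H ⊗ H` is invariant under the flip:
`Σ h₍₁₎ ⊗ S(h₍₂₎) = Σ S(h₍₂₎) ⊗ h₍₁₎`. -/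
theorem c2_flip_invariant
    {k : Type*} [Field k] {H : Type*} [Ring H] [HopfAlgebra k H]
    [FiniteDimensional k H]
    (n : k) (hn : n = (Module.finrank k H : k))
    (h : H)
    (hInt : ∀ x : H, x * h = counit (R := k) x • h)
    (hInt' : ∀ x : H, h * x = counit (R := k) x • h)
    (hεh : counit (R := k) h = n)
    (hSS : ∀ x : H, antipode (R := k) (antipode (R := k) x) = x)
    (hSh : antipode (R := k) h = h) :
    LinearMap.lTensor H (antipode (R := k)) (comul h)
      = TensorProduct.comm k H H (LinearMap.lTensor H (antipode (R := k)) (comul h)) :=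
  c2_flip_invariant_general h hSS hSh
end

section
/- For every x ∈ H one has Σ φ(x·h₍₁₎)·h₍₂₎ = n·S(x). (This is the identity F∘F = S for the Fourier transform F(x) = δ⁻¹·φ(x·—) of H, normalized with δ² = n: applying the Fourier transform of the dual Hopf algebra to F(x) returns S(x).) -/
open TensorProduct Coalgebra HopfAlgebra

set_option synthInstance.maxHeartbeats 1000000 in
/-- For every `x ∈ H` one has `Σ φ(x·h₍₁₎)·h₍₂₎ = n·S(x)` (the identity `F∘F = S` for the
Fourier transform `F(x) = δ⁻¹·φ(x·—)`, normalized with `δ² = n`). -/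
theorem fourier_squared_eq_antipode
    {k : Type*} [Field k] {H : Type*} [Ring H] [HopfAlgebra k H]
    [FiniteDimensional k H]
    (n : k) (hn : n = (Module.finrank k H : k)) (hn0 : n ≠ 0)
    (h : H)
    (hInt : ∀ x : H, x * h = counit (R := k) x • h)
    (hInt' : ∀ x : H, h * x = counit (R := k) x • h)
    (hεh : counit (R := k) h = n)
    (φ : H →ₗ[k] k)
    (hφInt : ∀ x : H, TensorProduct.lid k H (LinearMap.rTensor H φ (comul x)) = φ x • 1)
    (hφInt' : ∀ x : H, TensorProduct.rid k H (LinearMap.lTensor H φ (comul x)) = φ x • 1)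
    (hφ1 : φ 1 = n)
    (hSS : ∀ x : H, antipode (R := k) (antipode (R := k) x) = x)
    (hSh : antipode (R := k) h = h)
    (hφS : ∀ x : H, φ (antipode (R := k) x) = φ x)
    (hφh : φ h = n)
    (hφtr : ∀ x y : H, φ (x * y) = φ (y * x))
    :
    ∀ x : H,
      TensorProduct.lid k H
        (LinearMap.rTensor H (φ ∘ₗ LinearMap.mulLeft k x) (comul h))
        = n • antipode (R := k) x := by
  intro x
  -- abbreviations
  set S : H →ₗ[k] H := antipode (R := k) with hS
  -- L0 : multiplying by 1 ⊗ c
  have L0 : ∀ (y : H ⊗[k] H) (c : H), y * ((1 : H) ⊗ₜ[k] c) =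
      LinearMap.lTensor H (LinearMap.mul' k H)
        ((TensorProduct.assoc k H H H) (y ⊗ₜ[k] c)) := by
    intro y c
    induction y using TensorProduct.induction_on with
    | zero => simp only [zero_mul, zero_tmul, map_zero]
    | tmul a b =>
        rw [Algebra.TensorProduct.tmul_mul_tmul, mul_one, TensorProduct.assoc_tmul,
          LinearMap.lTensor_tmul, LinearMap.mul'_apply]
    | add u v hu hv => simp only [add_mul, add_tmul, map_add, hu, hv]
  -- L1 : rTensor of right multiplication
  have L1 : ∀ (y : H ⊗[k] H) (c : H),
      LinearMap.rTensor H (LinearMap.mulRight k c) y = y * (c ⊗ₜ[k] (1 : H)) := by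
    intro y c
    induction y using TensorProduct.induction_on with
    | zero => simp
    | tmul a b => simp [Algebra.TensorProduct.tmul_mul_tmul]
    | add u v hu hv => simp [add_mul, hu, hv]
  -- L2 : integral property at the level of comultiplications
  have L2 : ∀ a : H, comul (R := k) h * comul (R := k) a
      = counit (R := k) a • comul (R := k) h := by
    intro a
    rw [← Bialgebra.comul_mul, hInt', map_smul]
  -- key : the Sweedler computation
  have key : ∀ z : H ⊗[k] H,
      comul (R := k) h * (LinearMap.lTensor H (LinearMap.mul' k H)
        ((TensorProduct.assoc k H H H)
          (LinearMap.lTensor (H ⊗[k] H) S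
            (LinearMap.rTensor H (comul (R := k)) z))))
      = comul (R := k) h * ((1 : H) ⊗ₜ[k]
          S (TensorProduct.lid k H (LinearMap.rTensor H (counit (R := k)) z))) := by
    intro z
    induction z using TensorProduct.induction_on with
    | zero => simp only [map_zero, mul_zero, LinearEquiv.map_zero, tmul_zero]
    | tmul a b =>
        rw [LinearMap.rTensor_tmul, LinearMap.lTensor_tmul, ← L0, ← mul_assoc, L2,
          smul_mul_assoc, LinearMap.rTensor_tmul, lid_tmul, map_smul, tmul_smul,
          mul_smul_comm]
    | add u v hu hv =>
        simp only [map_add, tmul_add, mul_add, hu, hv]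
  -- P1 : Σ x₁ ⊗ x₂ S(x₃) = x ⊗ 1 (using the antipode axiom)
  have P1 : LinearMap.lTensor H
      (LinearMap.mul' k H ∘ₗ LinearMap.lTensor H S ∘ₗ comul (R := k))
      (comul (R := k) x) = x ⊗ₜ[k] (1 : H) := by
    rw [hS, mul_antipode_lTensor_comul, LinearMap.lTensor_comp, LinearMap.comp_apply,
      lTensor_counit_comul, LinearMap.lTensor_tmul]
    simp
  -- P2 : the same element, reassociated via coassociativity
  have Lcomm : (LinearMap.lTensor H (LinearMap.lTensor H S)) ∘ₗ
      (TensorProduct.assoc k H H H).toLinearMap =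
      (TensorProduct.assoc k H H H).toLinearMap ∘ₗ LinearMap.lTensor (H ⊗[k] H) S := by
    apply TensorProduct.ext_threefold
    intro a b c
    simp
  have P2 : LinearMap.lTensor H
      (LinearMap.mul' k H ∘ₗ LinearMap.lTensor H S ∘ₗ comul (R := k))
      (comul (R := k) x)
      = LinearMap.lTensor H (LinearMap.mul' k H)
        ((TensorProduct.assoc k H H H)
          (LinearMap.lTensor (H ⊗[k] H) S
            (LinearMap.rTensor H (comul (R := k)) (comul (R := k) x)))) := by
    rw [LinearMap.lTensor_comp, LinearMap.lTensor_comp, LinearMap.comp_apply,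
      LinearMap.comp_apply]
    congr 1
    have hco := Coalgebra.coassoc_apply (R := k) (A := H) x
    calc LinearMap.lTensor H (LinearMap.lTensor H S)
          (LinearMap.lTensor H (comul (R := k)) (comul (R := k) x))
        = LinearMap.lTensor H (LinearMap.lTensor H S)
            ((TensorProduct.assoc k H H H)
              (LinearMap.rTensor H (comul (R := k)) (comul (R := k) x))) := by rw [hco]
      _ = (TensorProduct.assoc k H H H)
            (LinearMap.lTensor (H ⊗[k] H) S
              (LinearMap.rTensor H (comul (R := k)) (comul (R := k) x))) := by
            exact LinearMap.congr_fun Lcomm _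
  -- L3 : Δh * (x ⊗ 1) = Δh * (1 ⊗ S x)
  have L3 : comul (R := k) h * (x ⊗ₜ[k] (1 : H))
      = comul (R := k) h * ((1 : H) ⊗ₜ[k] S x) := by
    have := key (comul (R := k) x)
    rw [← P2, P1] at this
    rw [this, rTensor_counit_comul, lid_tmul, one_smul]
  -- L4 : applying φ to the first leg
  have L4 : ∀ (y : H ⊗[k] H) (c : H),
      TensorProduct.lid k H (LinearMap.rTensor H φ (y * ((1 : H) ⊗ₜ[k] c)))
      = TensorProduct.lid k H (LinearMap.rTensor H φ y) * c := by
    intro y c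
    induction y using TensorProduct.induction_on with
    | zero => simp
    | tmul a b =>
        simp [Algebra.TensorProduct.tmul_mul_tmul, smul_mul_assoc]
    | add u v hu hv => simp [add_mul, hu, hv]
  -- main computation
  have hmap : (φ ∘ₗ LinearMap.mulLeft k x) = (φ ∘ₗ LinearMap.mulRight k x) := by
    ext y
    simp [hφtr]
  rw [hmap, LinearMap.rTensor_comp_apply, L1, L3, L4, hφInt h, hφh,
    smul_mul_assoc, one_mul]
end

section
/- For every x ∈ H one has Σ φ(S(x)·h₍₁₎)·h₍₂₎ = n·x. (This expresses that the Fourier transform F(x) = δ⁻¹·φ(x·—) is invertible with inverse F⁻¹ = F∘S, where the Fourier transform of the dual is ψ ↦ δ⁻¹·Σ ψ(h₍₁₎)·h₍₂₎ and δ² = n.) -/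
open TensorProduct Coalgebra HopfAlgebra

/-- For every `x ∈ H` one has `Σ φ(S(x)·h₍₁₎)·h₍₂₎ = n·x` (invertibility of the Fourier
transform, with inverse `F⁻¹ = F∘S`). -/
theorem fourier_inverse
    {k : Type*} [Field k] {H : Type*} [Ring H] [HopfAlgebra k H]
    [FiniteDimensional k H]
    (n : k) (hn : n = (Module.finrank k H : k)) (hn0 : n ≠ 0)
    (h : H)
    (hInt : ∀ x : H, x * h = counit (R := k) x • h)
    (hInt' : ∀ x : H, h * x = counit (R := k) x • h)
    (hεh : counit (R := k) h = n)
    (φ : H →ₗ[k] k)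
    (hφInt : ∀ x : H, TensorProduct.lid k H (LinearMap.rTensor H φ (comul x)) = φ x • 1)
    (hφInt' : ∀ x : H, TensorProduct.rid k H (LinearMap.lTensor H φ (comul x)) = φ x • 1)
    (hφ1 : φ 1 = n)
    (hSS : ∀ x : H, antipode (R := k) (antipode (R := k) x) = x)
    (hSh : antipode (R := k) h = h)
    (hφS : ∀ x : H, φ (antipode (R := k) x) = φ x)
    (hφh : φ h = n)
    (hφtr : ∀ x y : H, φ (x * y) = φ (y * x))
    :
    ∀ x : H,
      TensorProduct.lid k H
        (LinearMap.rTensor H (φ ∘ₗ LinearMap.mulLeft k (antipode (R := k) x)) (comul h))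
        = n • x := by
  set_option synthInstance.maxHeartbeats 1000000 in
  intro x
  -- multiplication helpers
  have hmulr : ∀ (a : H) (t : H ⊗[k] H),
      LinearMap.rTensor H (LinearMap.mulRight k a) t = t * (a ⊗ₜ[k] (1 : H)) := by
    intro a t
    induction t using TensorProduct.induction_on with
    | zero => simp
    | tmul u v => simp [Algebra.TensorProduct.tmul_mul_tmul]
    | add u v hu hv => simp [hu, hv, add_mul]
  have hmull : ∀ (a : H) (t : H ⊗[k] H),
      LinearMap.lTensor H (LinearMap.mulRight k a) t = t * ((1 : H) ⊗ₜ[k] a) := by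
    intro a t
    induction t using TensorProduct.induction_on with
    | zero => simp
    | tmul u v => simp [Algebra.TensorProduct.tmul_mul_tmul]
    | add u v hu hv => simp [hu, hv, add_mul]
  -- the key identity: `Δ(h)·(y ⊗ 1) = Δ(h)·(1 ⊗ S(y))`, using that `h` is a right integral
  have key : ∀ y : H, comul (R := k) h * (y ⊗ₜ[k] (1 : H))
      = comul (R := k) h * ((1 : H) ⊗ₜ[k] antipode (R := k) y) := by
    intro y
    set i₂S : H →ₗ[k] H ⊗[k] H :=
      TensorProduct.mk k H H 1 ∘ₗ antipode (R := k) with hi₂S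
    set Ψ : H ⊗[k] (H ⊗[k] H) →ₗ[k] H ⊗[k] H :=
      LinearMap.mulLeft k (comul (R := k) h) ∘ₗ
        LinearMap.lTensor H (LinearMap.mul' k H ∘ₗ LinearMap.lTensor H (antipode (R := k)))
      with hΨ
    have comp1 : (LinearMap.mul' k H ∘ₗ LinearMap.lTensor H (antipode (R := k))) ∘ₗ
        (comul : H →ₗ[k] H ⊗[k] H) = Algebra.linearMap k H ∘ₗ counit := by
      rw [LinearMap.comp_assoc]; exact mul_antipode_lTensor_comul
    have inner1 : LinearMap.lTensor H (LinearMap.mul' k H ∘ₗ LinearMap.lTensor H (antipode (R := k)))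
        (LinearMap.lTensor H comul (comul (R := k) y))
        = LinearMap.lTensor H (Algebra.linearMap k H)
            (LinearMap.lTensor H counit (comul (R := k) y)) := by
      rw [← LinearMap.comp_apply, ← LinearMap.lTensor_comp, comp1,
        LinearMap.lTensor_comp, LinearMap.comp_apply]
    have claim1 : Ψ (LinearMap.lTensor H comul (comul (R := k) y))
        = comul (R := k) h * (y ⊗ₜ[k] (1 : H)) := by
      rw [hΨ, LinearMap.comp_apply, inner1, Coalgebra.lTensor_counit_comul]
      simp
    have stepA : ∀ w : (H ⊗[k] H) ⊗[k] H,
        Ψ (TensorProduct.assoc k H H H w)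
          = LinearMap.mul' k (H ⊗[k] H)
              (TensorProduct.map (LinearMap.mulLeft k (comul (R := k) h)) i₂S w) := by
      intro w
      induction w using TensorProduct.induction_on with
      | zero => simp
      | add u v hu hv => simp only [map_add, hu, hv]
      | tmul t c =>
        induction t using TensorProduct.induction_on with
        | zero => simp
        | add u v hu hv => simp only [add_tmul, map_add, hu, hv]
        | tmul a b =>
          simp [hΨ, hi₂S, Algebra.TensorProduct.tmul_mul_tmul, mul_assoc]
    have hE : LinearMap.mulLeft k (comul (R := k) h) ∘ₗ (comul : H →ₗ[k] H ⊗[k] H)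
        = LinearMap.toSpanSingleton k (H ⊗[k] H) (comul (R := k) h) ∘ₗ counit := by
      refine LinearMap.ext fun z => ?_
      simp only [LinearMap.comp_apply, LinearMap.mulLeft_apply,
        LinearMap.toSpanSingleton_apply]
      rw [← Bialgebra.comul_mul, hInt', map_smul]
    have claim2 : Ψ (TensorProduct.assoc k H H H
          (LinearMap.rTensor H comul (comul (R := k) y)))
        = comul (R := k) h * ((1 : H) ⊗ₜ[k] antipode (R := k) y) := by
      have inner2 : TensorProduct.map (LinearMap.mulLeft k (comul (R := k) h)) i₂S
          (LinearMap.rTensor H comul (comul (R := k) y))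
          = TensorProduct.map (LinearMap.toSpanSingleton k (H ⊗[k] H) (comul (R := k) h)) i₂S
              (LinearMap.rTensor H counit (comul (R := k) y)) := by
        rw [← LinearMap.comp_apply, LinearMap.map_comp_rTensor, hE,
          ← LinearMap.map_comp_rTensor, LinearMap.comp_apply]
      rw [stepA, inner2, Coalgebra.rTensor_counit_comul]
      simp [hi₂S]
    rw [← claim1, ← claim2, Coalgebra.coassoc_apply]
  -- traciality: `φ(S(x)·h₁) = φ(h₁·S(x))`
  have htr : φ ∘ₗ LinearMap.mulLeft k (antipode (R := k) x)
      = φ ∘ₗ LinearMap.mulRight k (antipode (R := k) x) :=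
    LinearMap.ext fun z => hφtr _ z
  have hlid : ∀ (g : H →ₗ[k] H) (u : k ⊗[k] H),
      TensorProduct.lid k H (LinearMap.lTensor k g u)
        = g (TensorProduct.lid k H u) := by
    intro g u
    induction u using TensorProduct.induction_on with
    | zero => simp
    | tmul c v => simp
    | add u v hu hv => simp [hu, hv]
  rw [htr, LinearMap.rTensor_comp, LinearMap.comp_apply, hmulr, key,
    hSS, ← hmull, ← LinearMap.comp_apply, LinearMap.rTensor_comp_lTensor,
    ← LinearMap.lTensor_comp_rTensor, LinearMap.comp_apply, hlid, hφInt h, hφh]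
  simp [smul_mul_assoc]
end

section
/- For all x, y ∈ H one has Σ φ(h₍₁₎·x)·φ(S(h₍₂₎)·y) = n·φ(x·y). (This is the identity (F ⊗ F)(Σ h₍₁₎ ⊗ S(h₍₂₎)) = Σ φ₍₁₎ ⊗ φ₍₂₎ relating the Fourier transform F(x) = δ⁻¹·φ(x·—), with δ² = n, to the comultiplication of φ in the dual Hopf algebra, which is the functional x ⊗ y ↦ φ(x·y).) -/
/-!
Let `T x = Σ φ(h₍₁₎ x) h₍₂₎`. Since `h` is a right integral and `φ` a left integral of the dual,
`Σ T(x₍₁₎) x₍₂₎ = Σ φ(h₍₁₎ x₍₁₎) h₍₂₎ x₍₂₎ = φ(h x) 1 = ε(x) φ(h) 1`,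
i.e. `T ∗ id = φ(h) • 1` in the convolution algebra. Multiplying on the right by the convolution
inverse `S` of `id` gives `T = φ(h) • S`, so the left-hand side is
`φ(S(T x) y) = φ(h) φ(S²(x) y) = n φ(x y)`.
-/

open TensorProduct Coalgebra HopfAlgebra WithConv

namespace TensorProduct

theorem lid_map_apply {R M N : Type*} [CommSemiring R] [AddCommMonoid M] [Module R M]
    [AddCommMonoid N] [Module R N] (f : M →ₗ[R] R) (g : N →ₗ[R] R) (z : M ⊗[R] N) :
    TensorProduct.lid R R (map f g z) = g (TensorProduct.lid R N (f.rTensor N z)) := by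
  induction z using TensorProduct.induction_on with
  | zero => simp
  | tmul a b => simp
  | add a b ha hb => simp only [map_add, ha, hb]

section

variable {R C : Type*} [CommSemiring R] [Semiring C] [Algebra R C] (φ : C →ₗ[R] R)

theorem lid_rTensor_mul_one_tmul (w : C ⊗[R] C) (v : C) :
    TensorProduct.lid R C (φ.rTensor C (w * (1 ⊗ₜ v))) =
      TensorProduct.lid R C (φ.rTensor C w) * v := by
  induction w using TensorProduct.induction_on with
  | zero => simp
  | tmul a b => simp
  | add a b ha hb => simp only [add_mul, map_add, ha, hb]

theorem lid_rTensor_mul_tmul_one (w : C ⊗[R] C) (u : C) :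
    TensorProduct.lid R C (φ.rTensor C (w * (u ⊗ₜ 1))) =
      TensorProduct.lid R C ((φ ∘ₗ LinearMap.mulRight R u).rTensor C w) := by
  induction w using TensorProduct.induction_on with
  | zero => simp
  | tmul a b => simp
  | add a b ha hb => simp only [add_mul, map_add, ha, hb]

end

end TensorProduct

namespace HopfAlgebra

variable {R C : Type*} [CommSemiring R] [Semiring C] [HopfAlgebra R C] (φ : C →ₗ[R] R) (h : C)

/-- `x ↦ Σ φ(h₍₁₎ x) h₍₂₎`. -/
def integralMap : C →ₗ[R] C :=
  (TensorProduct.lid R C).toLinearMap ∘ₗ φ.rTensor C ∘ₗ LinearMap.mulLeft R (comul h) ∘ₗ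
    (TensorProduct.mk R C C).flip 1

theorem integralMap_apply (x : C) :
    integralMap φ h x =
      TensorProduct.lid R C ((φ ∘ₗ LinearMap.mulRight R x).rTensor C (comul h)) :=
  lid_rTensor_mul_tmul_one φ (comul h) x

variable {φ h}

theorem mul'_map_integralMap_id (z : C ⊗[R] C) :
    LinearMap.mul' R C (map (integralMap φ h) LinearMap.id z) =
      TensorProduct.lid R C (φ.rTensor C (comul h * z)) := by
  induction z using TensorProduct.induction_on with
  | zero => simp
  | tmul u v =>
    change TensorProduct.lid R C (φ.rTensor C (comul h * (u ⊗ₜ 1))) * v = _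
    rw [← lid_rTensor_mul_one_tmul, mul_assoc, Algebra.TensorProduct.tmul_mul_tmul, mul_one,
      one_mul]
  | add a b ha hb => simp only [map_add, mul_add, ha, hb]

theorem convMul_integralMap_id (hh : ∀ x, h * x = counit (R := R) x • h)
    (hφ : ∀ x, TensorProduct.lid R C (φ.rTensor C (comul x)) = φ x • 1) :
    toConv (integralMap φ h) * toConv LinearMap.id = φ h • 1 := by
  ext x
  rw [LinearMap.convMul_apply, ofConv_toConv, ofConv_toConv, mul'_map_integralMap_id,
    ← Bialgebra.comul_mul, hφ, hh, map_smul]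
  simp [Algebra.algebraMap_eq_smul_one, smul_smul, mul_comm]

theorem integralMap_eq_smul_antipode (hh : ∀ x, h * x = counit (R := R) x • h)
    (hφ : ∀ x, TensorProduct.lid R C (φ.rTensor C (comul x)) = φ x • 1) :
    integralMap φ h = φ h • antipode R := by
  apply toConv_injective
  calc toConv (integralMap φ h)
      = toConv (integralMap φ h) * (toConv LinearMap.id * toConv (antipode R)) := by
        rw [LinearMap.id_mul_antipode, mul_one]
    _ = φ h • toConv (antipode R) := by
        rw [← mul_assoc, convMul_integralMap_id hh hφ, smul_mul_assoc, one_mul]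
    _ = toConv (φ h • antipode R) := (toConv_smul _ _).symm

end HopfAlgebra

theorem fourier_of_c2_general
    {k : Type*} [Field k] {H : Type*} [Ring H] [HopfAlgebra k H]
    (n : k)
    (h : H)
    (hInt' : ∀ x : H, h * x = counit (R := k) x • h)
    (φ : H →ₗ[k] k)
    (hφInt : ∀ x : H, TensorProduct.lid k H (LinearMap.rTensor H φ (comul x)) = φ x • 1)
    (hSS : ∀ x : H, antipode (R := k) (antipode (R := k) x) = x)
    (hφh : φ h = n)
    :
    ∀ x y : H,
      TensorProduct.lid k k
        (TensorProduct.map (φ ∘ₗ LinearMap.mulRight k x)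
          (φ ∘ₗ LinearMap.mulRight k y ∘ₗ antipode (R := k)) (comul h))
        = n * φ (x * y) := by
  intro x y
  rw [TensorProduct.lid_map_apply, ← integralMap_apply,
    integralMap_eq_smul_antipode hInt' hφInt]
  simp [hSS, hφh]

/-- For all `x, y ∈ H` one has `Σ φ(h₍₁₎·x)·φ(S(h₍₂₎)·y) = n·φ(x·y)` (the identity
`(F ⊗ F)(Σ h₍₁₎ ⊗ S(h₍₂₎)) = Σ φ₍₁₎ ⊗ φ₍₂₎`). -/
theorem fourier_of_c2
    {k : Type*} [Field k] {H : Type*} [Ring H] [HopfAlgebra k H]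
    [FiniteDimensional k H]
    (n : k) (hn : n = (Module.finrank k H : k)) (hn0 : n ≠ 0)
    (h : H)
    (hInt : ∀ x : H, x * h = counit (R := k) x • h)
    (hInt' : ∀ x : H, h * x = counit (R := k) x • h)
    (hεh : counit (R := k) h = n)
    (φ : H →ₗ[k] k)
    (hφInt : ∀ x : H, TensorProduct.lid k H (LinearMap.rTensor H φ (comul x)) = φ x • 1)
    (hφInt' : ∀ x : H, TensorProduct.rid k H (LinearMap.lTensor H φ (comul x)) = φ x • 1)
    (hφ1 : φ 1 = n)
    (hSS : ∀ x : H, antipode (R := k) (antipode (R := k) x) = x)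
    (hSh : antipode (R := k) h = h)
    (hφS : ∀ x : H, φ (antipode (R := k) x) = φ x)
    (hφh : φ h = n)
    (hφtr : ∀ x y : H, φ (x * y) = φ (y * x))
    :
    ∀ x y : H,
      TensorProduct.lid k k
        (TensorProduct.map (φ ∘ₗ LinearMap.mulRight k x)
          (φ ∘ₗ LinearMap.mulRight k y ∘ₗ antipode (R := k)) (comul h))
        = n * φ (x * y) :=
  fourier_of_c2_general n h hInt' φ hφInt hSS hφh
end

section
/- If in addition τ is tracial, i.e. τ(x·y) = τ(y·x) for all x, y ∈ A, then the quasi-basis c of τ is invariant under the flip: σ(c) = c, where σ : A ⊗ A → A ⊗ A is the linear map with σ(x ⊗ y) = y ⊗ x. -/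
open TensorProduct

/-- If the nondegenerate functional `τ` is moreover tracial, then its quasi-basis `c` is
invariant under the flip `σ : A ⊗ A → A ⊗ A`, `x ⊗ y ↦ y ⊗ x`. -/
theorem quasi_basis_flip_invariant
    {k : Type*} [Field k] {A : Type*} [Ring A] [Algebra k A]
    [FiniteDimensional k A]
    (τ : A →ₗ[k] k)
    (hnd : ∀ x : A, (∀ y : A, τ (x * y) = 0) → x = 0)
    (hnd' : ∀ y : A, (∀ x : A, τ (x * y) = 0) → y = 0)
    (htr : ∀ x y : A, τ (x * y) = τ (y * x))
    (c : A ⊗[k] A)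
    (hc : ∀ x : A, TensorProduct.rid k A (LinearMap.lTensor A τ ((1 ⊗ₜ[k] x) * c)) = x) :
    TensorProduct.comm k A A c = c := by
  classical
  set B : A →ₗ[k] A →ₗ[k] k := (LinearMap.mul k A).compr₂ τ with hB
  set ψ : A →ₗ[k] Module.Dual k A := B.flip with hψ
  have hψapp : ∀ a y : A, ψ a y = τ (y * a) := fun a y => rfl
  have hψinj : Function.Injective ψ := by
    rw [← LinearMap.ker_eq_bot, LinearMap.ker_eq_bot']
    intro a ha
    exact hnd' a fun x => by simpa [hψapp] using LinearMap.congr_fun ha x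
  set Φ : A ⊗[k] A →ₗ[k] Module.Dual k (A ⊗[k] A) :=
    (TensorProduct.dualDistrib k A A).comp (TensorProduct.map ψ ψ) with hΦ
  have hmapinj : Function.Injective (TensorProduct.map ψ ψ) := by
    rw [← LinearMap.lTensor_comp_rTensor]
    exact (Module.Flat.lTensor_preserves_injective_linearMap ψ hψinj).comp
      (Module.Flat.rTensor_preserves_injective_linearMap ψ hψinj)
  have hddinj : Function.Injective (TensorProduct.dualDistrib k A A) :=
    (TensorProduct.dualDistribEquivOfBasis (Module.Free.chooseBasis k A)
      (Module.Free.chooseBasis k A)).injective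
  have hΦinj : Function.Injective Φ := hddinj.comp hmapinj
  -- evaluation formula
  have heval : ∀ (d : A ⊗[k] A) (y x : A),
      Φ d (y ⊗ₜ[k] x) = τ (y * (TensorProduct.rid k A (LinearMap.lTensor A τ ((1 ⊗ₜ[k] x) * d)))) := by
    intro d y x
    induction d using TensorProduct.induction_on with
    | zero => simp
    | tmul e f =>
      simp [hΦ, hψapp, Algebra.TensorProduct.tmul_mul_tmul, mul_comm, mul_smul_comm]
    | add d₁ d₂ ih₁ ih₂ =>
      rw [map_add, LinearMap.add_apply, ih₁, ih₂, mul_add, map_add, map_add, mul_add, map_add]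
  have hΦc : ∀ y x : A, Φ c (y ⊗ₜ[k] x) = τ (y * x) := fun y x => by rw [heval, hc]
  have hcommeval : ∀ (d : A ⊗[k] A) (y x : A),
      Φ (TensorProduct.comm k A A d) (y ⊗ₜ[k] x) = Φ d (x ⊗ₜ[k] y) := by
    intro d y x
    induction d using TensorProduct.induction_on with
    | zero => simp
    | tmul e f => simp [hΦ, hψapp, mul_comm]
    | add d₁ d₂ ih₁ ih₂ => simp only [map_add, LinearMap.add_apply, ih₁, ih₂]
  apply hΦinj
  apply TensorProduct.ext'
  intro y x
  rw [hcommeval, hΦc, hΦc, htr]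
end
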